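/- For the quadratic profiles t_L(y) = −(1/2)y^T K^t y and z_L(y) = (1/2)y^T K^z y on ℝ^{d−1}, and solutions t_E, z_E of Δt_E = −4G𝒥_z, Δz_E = −4G𝒥_t (constants) on a bounded symmetric domain A with t_E = t_L, z_E = z_L on ∂A, the differences δt = t_E − t_L and δz = z_E − z_L satisfy Δδt = tr(K^t) − 4G𝒥_z and Δδz = −tr(K^z) − 4G𝒥_t with zero boundary data; hence if Θ_t := tr(K^t) − 4G𝒥_z ≠ 0 and Θ_z := tr(K^z) + 4G𝒥_t ≠ 0, then Θ_z · δt = −Θ_t · δz throughout A. -/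

import Mathlib

/-- The Euclidean Laplacian: sum of second partial derivatives. -/
noncomputable def laplacian {n : ℕ} (u : EuclideanSpace ℝ (Fin n) → ℝ)
    (x : EuclideanSpace ℝ (Fin n)) : ℝ :=
  ∑ i : Fin n, fderiv ℝ (fun y => fderiv ℝ u y (EuclideanSpace.single i 1)) x
    (EuclideanSpace.single i 1)

open Filter Topology

section Stmt17Aux

variable {d : ℕ}

private noncomputable abbrev prj (i : Fin d) : EuclideanSpace ℝ (Fin d) →L[ℝ] ℝ :=
  EuclideanSpace.proj (𝕜 := ℝ) (ι := Fin d) i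

private theorem laplacian_eq_of {f : EuclideanSpace ℝ (Fin d) → ℝ}
    {f' : EuclideanSpace ℝ (Fin d) → EuclideanSpace ℝ (Fin d) →L[ℝ] ℝ}
    (hf : ∀ y, HasFDerivAt f (f' y) y)
    {g : Fin d → (EuclideanSpace ℝ (Fin d) →L[ℝ] ℝ)} {x : EuclideanSpace ℝ (Fin d)}
    (hg : ∀ i, HasFDerivAt (fun y => f' y (EuclideanSpace.single i 1)) (g i) x) :
    laplacian f x = ∑ i, g i (EuclideanSpace.single i 1) := by
  unfold laplacian
  refine Finset.sum_congr rfl fun i _ => ?_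
  have h1 : (fun y => fderiv ℝ f y (EuclideanSpace.single i 1)) =
      fun y => f' y (EuclideanSpace.single i 1) := by
    funext y; rw [(hf y).fderiv]
  rw [h1, (hg i).fderiv]

private theorem coord_hasFDerivAt (i : Fin d) (x : EuclideanSpace ℝ (Fin d)) :
    HasFDerivAt (fun y : EuclideanSpace ℝ (Fin d) => y i) (prj i) x :=
  (EuclideanSpace.proj (𝕜 := ℝ) (ι := Fin d) i).hasFDerivAt

private theorem qform_hasFDerivAt (M : Matrix (Fin d) (Fin d) ℝ) (x : EuclideanSpace ℝ (Fin d)) :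
    HasFDerivAt (fun y : EuclideanSpace ℝ (Fin d) => ∑ i, ∑ j, M i j * y i * y j)
      (∑ i, ∑ j, M i j • (x i • prj j + x j • prj i)) x := by
  refine HasFDerivAt.fun_sum fun i _ => HasFDerivAt.fun_sum fun j _ => ?_
  have h := ((coord_hasFDerivAt i x).mul (coord_hasFDerivAt j x)).const_mul (M i j)
  simpa [mul_assoc] using h

private theorem lap_qform (M : Matrix (Fin d) (Fin d) ℝ) (x : EuclideanSpace ℝ (Fin d)) :
    laplacian (fun y : EuclideanSpace ℝ (Fin d) => ∑ i, ∑ j, M i j * y i * y j) x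
      = 2 * Matrix.trace M := by
  have key := laplacian_eq_of (fun y => qform_hasFDerivAt M y)
    (g := fun k => ∑ i, ∑ j, M i j •
      (((EuclideanSpace.single k (1:ℝ)) j) • prj i + ((EuclideanSpace.single k (1:ℝ)) i) • prj j))
    (x := x) ?_
  · rw [key]
    have hk : ∀ k : Fin d, (∑ i, ∑ j, M i j •
        (((EuclideanSpace.single k (1:ℝ)) j) • prj i + ((EuclideanSpace.single k (1:ℝ)) i) • prj j))
        (EuclideanSpace.single k 1) = 2 * M k k := by
      intro k
      simp only [ContinuousLinearMap.sum_apply, ContinuousLinearMap.smul_apply,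
        ContinuousLinearMap.add_apply, PiLp.proj_apply, smul_eq_mul, EuclideanSpace.single_apply]
      simp only [mul_add, mul_ite, mul_zero, mul_one, Finset.sum_add_distrib,
        Finset.sum_ite_eq', Finset.mem_univ, if_true]
      simp [Finset.sum_ite_eq', two_mul]
    rw [Finset.sum_congr rfl (fun k _ => hk k), Matrix.trace]
    simp [Finset.mul_sum, Matrix.diag]
  · intro k
    have heq : (fun y : EuclideanSpace ℝ (Fin d) =>
        (∑ i, ∑ j, M i j • (y i • prj j + y j • prj i)) (EuclideanSpace.single k 1)) =
        fun y => (∑ i, ∑ j, M i j •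
          (((EuclideanSpace.single k (1:ℝ)) j) • prj i + ((EuclideanSpace.single k (1:ℝ)) i) • prj j)) y := by
      funext y
      simp only [ContinuousLinearMap.sum_apply, ContinuousLinearMap.smul_apply,
        ContinuousLinearMap.add_apply, PiLp.proj_apply, smul_eq_mul]
      exact Finset.sum_congr rfl fun a _ => Finset.sum_congr rfl fun b _ => by ring
    rw [heq]
    exact (∑ i, ∑ j, M i j •
      (((EuclideanSpace.single k (1:ℝ)) j) • prj i + ((EuclideanSpace.single k (1:ℝ)) i) • prj j)).hasFDerivAt


private theorem diff_fderiv_apply {u : EuclideanSpace ℝ (Fin d) → ℝ} {x : EuclideanSpace ℝ (Fin d)}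
    (hu : ContDiffAt ℝ 2 u x) (v : EuclideanSpace ℝ (Fin d)) :
    DifferentiableAt ℝ (fun y => fderiv ℝ u y v) x := by
  have h1 : ContDiffAt ℝ 1 (fderiv ℝ u) x := hu.fderiv_right (by norm_num)
  exact (h1.differentiableAt one_ne_zero).clm_apply (differentiableAt_const v)

private theorem laplacian_add {f g : EuclideanSpace ℝ (Fin d) → ℝ} {U : Set (EuclideanSpace ℝ (Fin d))}
    (hU : IsOpen U) {x : EuclideanSpace ℝ (Fin d)} (hx : x ∈ U)
    (hf : ∀ y ∈ U, ContDiffAt ℝ 2 f y) (hg : ∀ y ∈ U, ContDiffAt ℝ 2 g y) :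
    laplacian (fun y => f y + g y) x = laplacian f x + laplacian g x := by
  unfold laplacian
  rw [← Finset.sum_add_distrib]
  refine Finset.sum_congr rfl fun i _ => ?_
  set v := EuclideanSpace.single i (1:ℝ) with hv
  have hev : (fun y => fderiv ℝ (fun y => f y + g y) y v) =ᶠ[𝓝 x]
      fun y => fderiv ℝ f y v + fderiv ℝ g y v := by
    filter_upwards [hU.mem_nhds hx] with y hy
    rw [fderiv_fun_add ((hf y hy).differentiableAt two_ne_zero)
      ((hg y hy).differentiableAt two_ne_zero)]
    simp
  rw [hev.fderiv_eq, fderiv_fun_add (diff_fderiv_apply (hf x hx) v) (diff_fderiv_apply (hg x hx) v)]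
  simp

private theorem laplacian_sub {f g : EuclideanSpace ℝ (Fin d) → ℝ} {U : Set (EuclideanSpace ℝ (Fin d))}
    (hU : IsOpen U) {x : EuclideanSpace ℝ (Fin d)} (hx : x ∈ U)
    (hf : ∀ y ∈ U, ContDiffAt ℝ 2 f y) (hg : ∀ y ∈ U, ContDiffAt ℝ 2 g y) :
    laplacian (fun y => f y - g y) x = laplacian f x - laplacian g x := by
  unfold laplacian
  rw [← Finset.sum_sub_distrib]
  refine Finset.sum_congr rfl fun i _ => ?_
  set v := EuclideanSpace.single i (1:ℝ) with hv
  have hev : (fun y => fderiv ℝ (fun y => f y - g y) y v) =ᶠ[𝓝 x]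
      fun y => fderiv ℝ f y v - fderiv ℝ g y v := by
    filter_upwards [hU.mem_nhds hx] with y hy
    rw [fderiv_fun_sub ((hf y hy).differentiableAt two_ne_zero)
      ((hg y hy).differentiableAt two_ne_zero)]
    simp
  rw [hev.fderiv_eq, fderiv_fun_sub (diff_fderiv_apply (hf x hx) v) (diff_fderiv_apply (hg x hx) v)]
  simp

private theorem laplacian_const_mul {f : EuclideanSpace ℝ (Fin d) → ℝ} {U : Set (EuclideanSpace ℝ (Fin d))}
    (hU : IsOpen U) {x : EuclideanSpace ℝ (Fin d)} (hx : x ∈ U)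
    (hf : ∀ y ∈ U, ContDiffAt ℝ 2 f y) (c : ℝ) :
    laplacian (fun y => c * f y) x = c * laplacian f x := by
  unfold laplacian
  rw [Finset.mul_sum]
  refine Finset.sum_congr rfl fun i _ => ?_
  set v := EuclideanSpace.single i (1:ℝ) with hv
  have hev : (fun y => fderiv ℝ (fun y => c * f y) y v) =ᶠ[𝓝 x]
      fun y => c * fderiv ℝ f y v := by
    filter_upwards [hU.mem_nhds hx] with y hy
    rw [fderiv_const_mul ((hf y hy).differentiableAt two_ne_zero) c]
    simp
  rw [hev.fderiv_eq, fderiv_const_mul (diff_fderiv_apply (hf x hx) v) c]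
  simp

private theorem second_deriv_test {g : ℝ → ℝ}
    (hg : ∀ᶠ s in 𝓝 (0:ℝ), ContDiffAt ℝ 2 g s) (hmax : IsLocalMax g 0) :
    deriv (deriv g) 0 ≤ 0 := by
  by_contra hc
  push_neg at hc
  have hg0 : ContDiffAt ℝ 2 g 0 := hg.self_of_nhds
  have hd1 : deriv g 0 = 0 := hmax.deriv_eq_zero
  have hdd : DifferentiableAt ℝ (deriv g) 0 := by
    have h1 : ContDiffAt ℝ 1 (fderiv ℝ g) 0 := hg0.fderiv_right (by norm_num)
    have h2 : DifferentiableAt ℝ (fun y => fderiv ℝ g y 1) 0 :=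
      (h1.differentiableAt one_ne_zero).clm_apply (differentiableAt_const 1)
    have : (deriv g) = fun y => fderiv ℝ g y 1 := by
      funext y; rw [fderiv_apply_one_eq_deriv]
    rw [this]; exact h2
  have hslope := hasDerivAt_iff_tendsto_slope.mp hdd.hasDerivAt
  have hpos : ∀ᶠ y in 𝓝[≠] (0:ℝ), 0 < slope (deriv g) 0 y :=
    hslope.eventually (eventually_gt_nhds hc)
  have hdiff : ∀ᶠ y in 𝓝 (0:ℝ), DifferentiableAt ℝ g y :=
    hg.mono fun y hy => hy.differentiableAt two_ne_zero
  have hball : ∀ᶠ y in 𝓝 (0:ℝ), DifferentiableAt ℝ g y ∧ g y ≤ g 0 := hdiff.and hmax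
  rw [Metric.eventually_nhds_iff] at hball
  obtain ⟨δ₁, hδ₁, h₁⟩ := hball
  rw [eventually_nhdsWithin_iff, Metric.eventually_nhds_iff] at hpos
  obtain ⟨δ₂, hδ₂, h₂⟩ := hpos
  set η := min δ₁ δ₂ / 2 with hη
  have hη0 : 0 < η := by positivity
  have hηδ₁ : η < δ₁ := by
    have : min δ₁ δ₂ ≤ δ₁ := min_le_left _ _
    simp only [hη]; linarith
  have hηδ₂ : η < δ₂ := by
    have : min δ₁ δ₂ ≤ δ₂ := min_le_right _ _
    simp only [hη]; linarith
  have hderivpos : ∀ y ∈ Set.Ioo (0:ℝ) η, 0 < deriv g y := by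
    intro y hy
    have hy0 : y ≠ 0 := ne_of_gt hy.1
    have hyd : dist y 0 < δ₂ := by
      rw [Real.dist_eq, sub_zero, abs_of_pos hy.1]; linarith [hy.2]
    have h2' := h₂ hyd (Set.mem_compl_singleton_iff.mpr hy0)
    rw [slope_def_field, hd1, sub_zero, sub_zero] at h2'
    rcases div_pos_iff.mp h2' with ⟨h, _⟩ | ⟨_, h⟩
    · exact h
    · linarith [hy.1]
  have hcont : ContinuousOn g (Set.Icc 0 η) := by
    intro y hy
    have hyd : dist y 0 < δ₁ := by
      rw [Real.dist_eq, sub_zero, abs_of_nonneg hy.1]; linarith [hy.2]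
    exact ((h₁ hyd).1.continuousAt).continuousWithinAt
  have hmono : StrictMonoOn g (Set.Icc 0 η) := by
    apply strictMonoOn_of_deriv_pos (convex_Icc 0 η) hcont
    intro y hy
    rw [interior_Icc] at hy
    exact hderivpos y hy
  have hlt : g 0 < g η := hmono (Set.left_mem_Icc.mpr hη0.le)
    (Set.right_mem_Icc.mpr hη0.le) hη0
  have hle : g η ≤ g 0 := by
    have : dist η 0 < δ₁ := by rw [Real.dist_eq, sub_zero, abs_of_pos hη0]; linarith
    exact (h₁ this).2
  linarith

private theorem second_directional_nonpos {u : EuclideanSpace ℝ (Fin d) → ℝ}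
    {U : Set (EuclideanSpace ℝ (Fin d))} (hU : IsOpen U) {x₀ : EuclideanSpace ℝ (Fin d)}
    (hx : x₀ ∈ U) (hu : ∀ y ∈ U, ContDiffAt ℝ 2 u y) (hmax : IsLocalMax u x₀)
    (v : EuclideanSpace ℝ (Fin d)) :
    fderiv ℝ (fun y => fderiv ℝ u y v) x₀ v ≤ 0 := by
  set φ : ℝ → EuclideanSpace ℝ (Fin d) := fun s => x₀ + s • v with hφdef
  have hφC : ContDiff ℝ 2 φ := contDiff_const.add (contDiff_id.smul contDiff_const)
  have hφc : Continuous φ := hφC.continuous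
  have hφd : ∀ s : ℝ, HasDerivAt φ v s := by
    intro s
    simpa [hφdef] using ((hasDerivAt_id s).smul_const v).const_add x₀
  have hφ0 : φ 0 = x₀ := by simp [hφdef]
  set g : ℝ → ℝ := fun s => u (φ s) with hgdef
  have htend : Tendsto φ (𝓝 0) (𝓝 x₀) := by
    have := hφc.tendsto 0
    rwa [hφ0] at this
  have hmem : ∀ᶠ s in 𝓝 (0:ℝ), φ s ∈ U := htend (hU.mem_nhds hx)
  have hgc2 : ∀ᶠ s in 𝓝 (0:ℝ), ContDiffAt ℝ 2 g s := by
    filter_upwards [hmem] with s hs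
    exact (hu _ hs).comp s hφC.contDiffAt
  have hgmax : IsLocalMax g 0 := by
    have h1 : ∀ᶠ s in 𝓝 (0:ℝ), u (φ s) ≤ u x₀ := htend.eventually hmax
    filter_upwards [h1] with s hs
    simpa [hgdef, hφ0] using hs
  have h2 := second_deriv_test hgc2 hgmax
  have hder : deriv g =ᶠ[𝓝 (0:ℝ)] fun s => fderiv ℝ u (φ s) v := by
    filter_upwards [hmem] with s hs
    exact (((hu _ hs).differentiableAt two_ne_zero).hasFDerivAt.comp_hasDerivAt s (hφd s)).deriv
  have hdiffh : DifferentiableAt ℝ (fun y => fderiv ℝ u y v) x₀ :=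
    diff_fderiv_apply (hu x₀ hx) v
  have hD : HasDerivAt (fun s => fderiv ℝ u (φ s) v)
      (fderiv ℝ (fun y => fderiv ℝ u y v) x₀ v) 0 := by
    have hh := hdiffh.hasFDerivAt
    rw [← hφ0] at hh
    have h3 := hh.comp_hasDerivAt 0 (hφd 0)
    rw [hφ0] at h3
    exact h3
  have heq : deriv (deriv g) 0 = fderiv ℝ (fun y => fderiv ℝ u y v) x₀ v := by
    rw [hder.deriv_eq, hD.deriv]
  linarith

private theorem coord_contDiff (i : Fin d) :
    ContDiff ℝ 2 (fun y : EuclideanSpace ℝ (Fin d) => y i) :=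
  (EuclideanSpace.proj (𝕜 := ℝ) (ι := Fin d) i).contDiff

private theorem qform_contDiff (M : Matrix (Fin d) (Fin d) ℝ) :
    ContDiff ℝ 2 (fun y : EuclideanSpace ℝ (Fin d) => ∑ i, ∑ j, M i j * y i * y j) := by
  refine ContDiff.sum fun i _ => ContDiff.sum fun j _ => ?_
  exact (contDiff_const.mul (coord_contDiff i)).mul (coord_contDiff j)

private theorem qone_nonneg (y : EuclideanSpace ℝ (Fin d)) :
    0 ≤ ∑ i, ∑ j, (1 : Matrix (Fin d) (Fin d) ℝ) i j * y i * y j := by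
  have h : ∀ i : Fin d, ∑ j, (1 : Matrix (Fin d) (Fin d) ℝ) i j * y i * y j = y i * y i := by
    intro i
    simp [Matrix.one_apply, ite_mul, zero_mul, one_mul, Finset.sum_ite_eq]
  rw [Finset.sum_congr rfl fun i _ => h i]
  exact Finset.sum_nonneg fun i _ => mul_self_nonneg _

private theorem lap_qone (x : EuclideanSpace ℝ (Fin d)) :
    laplacian (fun y : EuclideanSpace ℝ (Fin d) =>
      ∑ i, ∑ j, (1 : Matrix (Fin d) (Fin d) ℝ) i j * y i * y j) x = 2 * (d : ℝ) := by
  rw [lap_qform]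
  simp [Matrix.trace_one]

private theorem max_principle (hd : 0 < d) {A : Set (EuclideanSpace ℝ (Fin d))}
    (hA : IsOpen A) (hbdd : Bornology.IsBounded A)
    {u : EuclideanSpace ℝ (Fin d) → ℝ} (hu : ∀ x ∈ A, ContDiffAt ℝ 2 u x)
    (huc : ContinuousOn u (closure A))
    (hlap : ∀ x ∈ A, laplacian u x = 0) (hb : ∀ x ∈ frontier A, u x = 0) :
    ∀ x ∈ A, u x ≤ 0 := by
  intro x hx
  by_contra hpos
  push_neg at hpos
  set N : EuclideanSpace ℝ (Fin d) → ℝ :=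
    fun y => ∑ i, ∑ j, (1 : Matrix (Fin d) (Fin d) ℝ) i j * y i * y j with hNdef
  have hNC : ContDiff ℝ 2 N := qform_contDiff _
  have hN0 : ∀ y, 0 ≤ N y := fun y => qone_nonneg y
  have hlapN : ∀ y, laplacian N y = 2 * (d : ℝ) := fun y => lap_qone y
  have hcl : IsCompact (closure A) := hbdd.isCompact_closure
  have hne : (closure A).Nonempty := ⟨x, subset_closure hx⟩
  obtain ⟨z, hz, hzmax⟩ := hcl.exists_isMaxOn hne hNC.continuous.continuousOn
  have hR0 : 0 ≤ N z := le_trans (hN0 x) (hzmax (subset_closure hx))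
  set R := N z with hRdef
  set ε := u x / (2 * (R + 1)) with hε
  have hε0 : 0 < ε := div_pos hpos (by positivity)
  have hwc : ContinuousOn (fun y => u y + ε * N y) (closure A) :=
    huc.add ((continuous_const.mul hNC.continuous).continuousOn)
  obtain ⟨x₀, hx₀cl, hx₀max⟩ := hcl.exists_isMaxOn hne hwc
  have hg2 : ∀ y ∈ A, ContDiffAt ℝ 2 (fun y => ε * N y) y :=
    fun y _ => (contDiff_const.mul hNC).contDiffAt
  have hx₀f : x₀ ∈ frontier A := by
    rw [hA.frontier_eq]
    refine ⟨hx₀cl, ?_⟩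
    intro hx₀A
    have hw2 : ∀ y ∈ A, ContDiffAt ℝ 2 (fun y => u y + ε * N y) y :=
      fun y hy => (hu y hy).add (hg2 y hy)
    have hloc : IsLocalMax (fun y => u y + ε * N y) x₀ := by
      filter_upwards [hA.mem_nhds hx₀A] with y hy
      exact hx₀max (subset_closure hy)
    have hlapw : laplacian (fun y => u y + ε * N y) x₀ = ε * (2 * (d : ℝ)) := by
      rw [laplacian_add hA hx₀A hu hg2,
        laplacian_const_mul hA hx₀A (fun y _ => hNC.contDiffAt) ε,
        hlap x₀ hx₀A, hlapN x₀]
      ring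
    have hnonpos : laplacian (fun y => u y + ε * N y) x₀ ≤ 0 := by
      unfold laplacian
      exact Finset.sum_nonpos fun i _ =>
        second_directional_nonpos hA hx₀A hw2 hloc _
    have hd1 : (1 : ℝ) ≤ (d : ℝ) := by exact_mod_cast hd
    nlinarith
  have h1 : u x + ε * N x ≤ u x₀ + ε * N x₀ := hx₀max (subset_closure hx)
  have h2 : u x₀ = 0 := hb x₀ hx₀f
  have h3 : N x₀ ≤ R := hzmax hx₀cl
  have h4 : u x ≤ ε * R := by nlinarith [hN0 x, hε0]
  have hεeq : ε * (2 * (R + 1)) = u x := by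
    rw [hε]; field_simp
  nlinarith [mul_nonneg hε0.le hR0]

end Stmt17Aux

/-- Core computation of Appendix B. -/
theorem stmt17 {d : ℕ} (A : Set (EuclideanSpace ℝ (Fin d)))
    (hA : IsOpen A) (hbdd : Bornology.IsBounded A)
    (hsym : ∀ x ∈ A, -x ∈ A)
    (Kt Kz : Matrix (Fin d) (Fin d) ℝ) (hKt : Kt.IsSymm) (hKz : Kz.IsSymm)
    (G Jt Jz : ℝ) (hG : 0 < G)
    (tL zL tE zE : EuclideanSpace ℝ (Fin d) → ℝ)
    (htL : ∀ y, tL y = -(1 / 2) * ∑ i, ∑ j, Kt i j * y i * y j)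
    (hzL : ∀ y, zL y = (1 / 2) * ∑ i, ∑ j, Kz i j * y i * y j)
    (htE : ContDiffOn ℝ 2 tE (closure A)) (hzE : ContDiffOn ℝ 2 zE (closure A))
    (hΔt : ∀ x ∈ A, laplacian tE x = -(4 * G * Jz))
    (hΔz : ∀ x ∈ A, laplacian zE x = -(4 * G * Jt))
    (hbt : ∀ x ∈ frontier A, tE x = tL x)
    (hbz : ∀ x ∈ frontier A, zE x = zL x)
    (Θt Θz : ℝ)
    (hΘt : Θt = Matrix.trace Kt - 4 * G * Jz)
    (hΘz : Θz = Matrix.trace Kz + 4 * G * Jt)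
    (hΘt0 : Θt ≠ 0) (hΘz0 : Θz ≠ 0) :
    (∀ x ∈ A, laplacian (fun y => tE y - tL y) x = Matrix.trace Kt - 4 * G * Jz) ∧
    (∀ x ∈ A, laplacian (fun y => zE y - zL y) x = -(Matrix.trace Kz) - 4 * G * Jt) ∧
    (∀ x ∈ frontier A, tE x - tL x = 0 ∧ zE x - zL x = 0) ∧
    (∀ x ∈ A, Θz * (tE x - tL x) = -(Θt * (zE x - zL x))) := by
  have hcdt : ∀ x ∈ A, ContDiffAt ℝ 2 tE x := fun x hx =>
    htE.contDiffAt (Filter.mem_of_superset (hA.mem_nhds hx) subset_closure)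
  have hcdz : ∀ x ∈ A, ContDiffAt ℝ 2 zE x := fun x hx =>
    hzE.contDiffAt (Filter.mem_of_superset (hA.mem_nhds hx) subset_closure)
  have htLC : ContDiff ℝ 2 tL := by
    rw [show tL = _ from funext htL]
    exact contDiff_const.mul (qform_contDiff Kt)
  have hzLC : ContDiff ℝ 2 zL := by
    rw [show zL = _ from funext hzL]
    exact contDiff_const.mul (qform_contDiff Kz)
  have lapTL : ∀ x, laplacian tL x = -Matrix.trace Kt := by
    intro x
    rw [show tL = _ from funext htL,
      laplacian_const_mul isOpen_univ (Set.mem_univ x)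
        (fun y _ => (qform_contDiff Kt).contDiffAt) (-(1/2)), lap_qform]
    ring
  have lapZL : ∀ x, laplacian zL x = Matrix.trace Kz := by
    intro x
    rw [show zL = _ from funext hzL,
      laplacian_const_mul isOpen_univ (Set.mem_univ x)
        (fun y _ => (qform_contDiff Kz).contDiffAt) (1/2), lap_qform]
    ring
  have c1 : ∀ x ∈ A, laplacian (fun y => tE y - tL y) x
      = Matrix.trace Kt - 4 * G * Jz := by
    intro x hx
    rw [laplacian_sub hA hx hcdt (fun y _ => htLC.contDiffAt), hΔt x hx, lapTL]
    ring
  have c2 : ∀ x ∈ A, laplacian (fun y => zE y - zL y) x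
      = -(Matrix.trace Kz) - 4 * G * Jt := by
    intro x hx
    rw [laplacian_sub hA hx hcdz (fun y _ => hzLC.contDiffAt), hΔz x hx, lapZL]
    ring
  refine ⟨c1, c2, fun x hx => ⟨by rw [hbt x hx]; ring, by rw [hbz x hx]; ring⟩, ?_⟩
  rcases Nat.eq_zero_or_pos d with hd0 | hd
  · intro x hx
    exfalso
    apply hΘt0
    have h := hΔt x hx
    have hz0 : laplacian tE x = 0 := by
      unfold laplacian
      subst hd0
      simp
    have htr : Matrix.trace Kt = 0 := by
      subst hd0
      simp [Matrix.trace]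
    rw [hΘt, htr]
    rw [hz0] at h
    linarith
  · have hδt2 : ∀ y ∈ A, ContDiffAt ℝ 2 (fun y => tE y - tL y) y :=
      fun y hy => (hcdt y hy).sub htLC.contDiffAt
    have hδz2 : ∀ y ∈ A, ContDiffAt ℝ 2 (fun y => zE y - zL y) y :=
      fun y hy => (hcdz y hy).sub hzLC.contDiffAt
    have main : ∀ a b : ℝ, a * Θt - b * Θz = 0 →
        ∀ x ∈ A, a * (tE x - tL x) + b * (zE x - zL x) ≤ 0 := by
      intro a b hab
      have h2a : ∀ y ∈ A, ContDiffAt ℝ 2 (fun y => a * (tE y - tL y)) y :=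
        fun y hy => contDiffAt_const.mul (hδt2 y hy)
      have h2b : ∀ y ∈ A, ContDiffAt ℝ 2 (fun y => b * (zE y - zL y)) y :=
        fun y hy => contDiffAt_const.mul (hδz2 y hy)
      have hu2 : ∀ y ∈ A, ContDiffAt ℝ 2
          (fun y => a * (tE y - tL y) + b * (zE y - zL y)) y :=
        fun y hy => (h2a y hy).add (h2b y hy)
      have huc : ContinuousOn (fun y => a * (tE y - tL y) + b * (zE y - zL y))
          (closure A) :=
        (continuousOn_const.mul (htE.continuousOn.sub
            htLC.continuous.continuousOn)).add
          (continuousOn_const.mul (hzE.continuousOn.sub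
            hzLC.continuous.continuousOn))
      have hlap0 : ∀ y ∈ A,
          laplacian (fun y => a * (tE y - tL y) + b * (zE y - zL y)) y = 0 := by
        intro y hy
        rw [laplacian_add hA hy h2a h2b,
          laplacian_const_mul hA hy hδt2 a,
          laplacian_const_mul hA hy hδz2 b,
          c1 y hy, c2 y hy]
        rw [hΘt, hΘz] at hab
        linarith
      have hb0 : ∀ y ∈ frontier A,
          (fun y => a * (tE y - tL y) + b * (zE y - zL y)) y = 0 := by
        intro y hy
        simp only
        rw [hbt y hy, hbz y hy]
        ring
      exact max_principle hd hA hbdd hu2 huc hlap0 hb0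
    intro x hx
    have h1 := main Θz Θt (by ring) x hx
    have h2 := main (-Θz) (-Θt) (by ring) x hx
    linarith
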